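/- There is an absolute constant C > 0 such that the following holds. Let T and R be BSTs on the key set {1,…,n}, let i be any key, and let T′ be the tree obtained from T by splaying i. Then (1 + d_T(i)) + φ_R(T′) − φ_R(T) ≤ C·(d_R(i) + 1); that is, the amortized cost of splaying i with respect to the min-depth potential φ_R is O(d_R(i)). -/

import Mathlib

/-- Binary trees with natural-number keys. -/
inductive BTree : Type where
  | leaf : BTree
  | node : BTree → ℕ → BTree → BTree

namespace BTree

/-- The set of keys appearing in the tree. -/
def keys : BTree → Finset ℕ
  | leaf => ∅
  | node l x r => keys l ∪ {x} ∪ keys r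

/-- Binary search tree property: left keys smaller, right keys larger. -/
def IsSearchTree : BTree → Prop
  | leaf => True
  | node l x r => (∀ y ∈ keys l, y < x) ∧ (∀ y ∈ keys r, x < y) ∧
      IsSearchTree l ∧ IsSearchTree r

/-- Depth of the key `y` (number of edges from the root), via the search path. -/
def depth : BTree → ℕ → ℕ
  | leaf, _ => 0
  | node l x r, y =>
      if y = x then 0
      else if y < x then depth l y + 1
      else depth r y + 1

/-- Number of edges on the path between the keys `a` and `b` (for a search tree). -/
def dist : BTree → ℕ → ℕ → ℕ
  | leaf, _, _ => 0
  | node l x r, a, b =>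
      if a < x ∧ b < x then dist l a b
      else if x < a ∧ x < b then dist r a b
      else depth (node l x r) a + depth (node l x r) b

/-- `T` is a binary search tree on the key set `{1, …, n}`. -/
def IsBSTOn (T : BTree) (n : ℕ) : Prop :=
  T.IsSearchTree ∧ T.keys = Finset.Icc 1 n

end BTree

namespace BTree

/-- The subtree of `T` rooted at the key `y` (via the search path); `leaf` if absent. -/
def subtreeAt : BTree → ℕ → BTree
  | leaf, _ => leaf
  | node l x r, y =>
      if y = x then node l x r
      else if y < x then subtreeAt l y
      else subtreeAt r y

/-- Splaying the key `x` to the root: the standard zig / zig-zig / zig-zag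
bottom-up restructuring. -/
def splay (x : ℕ) : BTree → BTree
  | leaf => leaf
  | node l a r =>
    if x = a then node l a r
    else if x < a then
      match l with
      | leaf => node l a r
      | node ll b lr =>
        if x = b then node ll b (node lr a r)          -- zig
        else if x < b then
          match splay x ll with                        -- zig-zig
          | leaf => node ll b (node lr a r)
          | node t1 c t2 => node t1 c (node t2 b (node lr a r))
        else
          match splay x lr with                        -- zig-zag
          | leaf => node ll b (node lr a r)
          | node t1 c t2 => node (node ll b t1) c (node t2 a r)
    else
      match r with
      | leaf => node l a r
      | node rl b rr =>
        if x = b then node (node l a rl) b rr          -- zig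
        else if x < b then
          match splay x rl with                        -- zig-zag
          | leaf => node (node l a rl) b rr
          | node t1 c t2 => node (node l a t1) c (node t2 b rr)
        else
          match splay x rr with                        -- zig-zig
          | leaf => node (node l a rl) b rr
          | node t1 c t2 => node (node (node l a rl) b t1) c t2

end BTree

/-- The min-depth potential of `T` with respect to the reference tree `R` (both on the
key set `{1,…,n}`): `φ_R(T) = ∑_{i=1}^n (−2)·min_{j ∈ T(i)} d_R(j)`. -/
noncomputable def minDepthPotential (R : BTree) (n : ℕ) (T : BTree) : ℝ :=
  ∑ i ∈ Finset.Icc 1 n,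
    (-2 : ℝ) * (sInf ((fun j => BTree.depth R j) '' ((BTree.subtreeAt T i).keys : Set ℕ)) : ℕ)


namespace BTree

lemma mem_keys_node {y : ℕ} {l r : BTree} {a : ℕ} :
    y ∈ keys (node l a r) ↔ y ∈ keys l ∨ y = a ∨ y ∈ keys r := by
  simp [keys, Finset.mem_union, or_assoc]; tauto

lemma keys_node (l : BTree) (a : ℕ) (r : BTree) :
    keys (node l a r) = keys l ∪ {a} ∪ keys r := rfl

/-- size -/
def size : BTree → ℕ
  | leaf => 0
  | node l _ r => size l + size r + 1

/-- convexity of a key set -/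
def Convex (s : Finset ℕ) : Prop :=
  ∀ ⦃u v w : ℕ⦄, u ∈ s → w ∈ s → u ≤ v → v ≤ w → v ∈ s

/-- min depth over a key set, in the reference tree R -/
noncomputable def μ (R : BTree) (s : Finset ℕ) : ℕ :=
  sInf ((fun j => depth R j) '' (s : Set ℕ))

lemma μ_le {R : BTree} {s : Finset ℕ} {j : ℕ} (h : j ∈ s) : μ R s ≤ depth R j :=
  Nat.sInf_le ⟨j, by simpa using h, rfl⟩

lemma exists_μ {R : BTree} {s : Finset ℕ} (h : s.Nonempty) :
    ∃ j ∈ s, depth R j = μ R s := by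
  obtain ⟨j0, hj0⟩ := h
  have hne : ((fun j => depth R j) '' (s : Set ℕ)).Nonempty := ⟨depth R j0, j0, by simpa using hj0, rfl⟩
  obtain ⟨j, hj, hd⟩ := Nat.sInf_mem hne
  exact ⟨j, by simpa using hj, hd⟩

lemma μ_mono {R : BTree} {s t : Finset ℕ} (hsub : s ⊆ t) (hs : s.Nonempty) :
    μ R t ≤ μ R s := by
  obtain ⟨j, hj, hd⟩ := exists_μ (R := R) hs
  calc μ R t ≤ depth R j := μ_le (hsub hj)
    _ = μ R s := hd

/-- the potential, recursively -/
noncomputable def Φ (R : BTree) : BTree → ℤ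
  | leaf => 0
  | node l a r => Φ R l + Φ R r - 2 * (μ R (keys (node l a r)) : ℤ)

end BTree

namespace BTree

lemma mem_left_of_lt {l r : BTree} {a x : ℕ} (hS : IsSearchTree (node l a r))
    (hx : x ∈ keys (node l a r)) (hlt : x < a) : x ∈ keys l := by
  obtain ⟨hl, hr, _, _⟩ := hS
  rcases mem_keys_node.1 hx with h | h | h
  · exact h
  · omega
  · exact absurd (hr x h) (by omega)

lemma mem_right_of_lt {l r : BTree} {a x : ℕ} (hS : IsSearchTree (node l a r))
    (hx : x ∈ keys (node l a r)) (hlt : a < x) : x ∈ keys r := by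
  obtain ⟨hl, hr, _, _⟩ := hS
  rcases mem_keys_node.1 hx with h | h | h
  · exact absurd (hl x h) (by omega)
  · omega
  · exact h

lemma depth_node_lt {l r : BTree} {a x : ℕ} (h : x < a) :
    depth (node l a r) x = depth l x + 1 := by
  simp [depth, h, Nat.ne_of_lt h]

lemma depth_node_gt {l r : BTree} {a x : ℕ} (h : a < x) :
    depth (node l a r) x = depth r x + 1 := by
  have h1 : x ≠ a := by omega
  have h2 : ¬ x < a := by omega
  simp [depth, h1, h2]

lemma subtreeAt_node_lt {l r : BTree} {a x : ℕ} (h : x < a) :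
    subtreeAt (node l a r) x = subtreeAt l x := by
  simp [subtreeAt, h, Nat.ne_of_lt h]

lemma subtreeAt_node_gt {l r : BTree} {a x : ℕ} (h : a < x) :
    subtreeAt (node l a r) x = subtreeAt r x := by
  have h1 : x ≠ a := by omega
  have h2 : ¬ x < a := by omega
  simp [subtreeAt, h1, h2]

lemma subtreeAt_self {l r : BTree} {a : ℕ} :
    subtreeAt (node l a r) a = node l a r := by simp [subtreeAt]

lemma convex_left {l r : BTree} {a : ℕ} (hS : IsSearchTree (node l a r))
    (hC : Convex (keys (node l a r))) : Convex (keys l) := by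
  obtain ⟨hl, hr, _, _⟩ := hS
  intro u v w hu hw huv hvw
  have hv : v ∈ keys (node l a r) :=
    hC (mem_keys_node.2 (Or.inl hu)) (mem_keys_node.2 (Or.inl hw)) huv hvw
  have hva : v < a := lt_of_le_of_lt hvw (hl w hw)
  rcases mem_keys_node.1 hv with h | h | h
  · exact h
  · omega
  · exact absurd (hr v h) (by omega)

lemma convex_right {l r : BTree} {a : ℕ} (hS : IsSearchTree (node l a r))
    (hC : Convex (keys (node l a r))) : Convex (keys r) := by
  obtain ⟨hl, hr, _, _⟩ := hS
  intro u v w hu hw huv hvw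
  have hv : v ∈ keys (node l a r) :=
    hC (mem_keys_node.2 (Or.inr (Or.inr hu))) (mem_keys_node.2 (Or.inr (Or.inr hw))) huv hvw
  have hva : a < v := lt_of_lt_of_le (hr u hu) huv
  rcases mem_keys_node.1 hv with h | h | h
  · exact absurd (hl v h) (by omega)
  · omega
  · exact h

/-- between two equal-depth keys of a search tree there is a strictly shallower key -/
lemma exists_between {R : BTree} (hR : IsSearchTree R) :
    ∀ j1 j2 : ℕ, j1 ∈ keys R → j2 ∈ keys R → j1 < j2 → depth R j1 = depth R j2 →
      ∃ w, j1 < w ∧ w < j2 ∧ depth R w < depth R j1 := by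
  induction R with
  | leaf => intro j1 j2 h1; simp [keys] at h1
  | node l a r ihl ihr =>
    intro j1 j2 h1 h2 hlt hd
    obtain ⟨hl, hr, hsl, hsr⟩ := hR
    rcases lt_trichotomy j1 a with hj1 | hj1 | hj1
    · rcases lt_trichotomy j2 a with hj2 | hj2 | hj2
      · have m1 := mem_left_of_lt ⟨hl, hr, hsl, hsr⟩ h1 hj1
        have m2 := mem_left_of_lt ⟨hl, hr, hsl, hsr⟩ h2 hj2
        rw [depth_node_lt hj1, depth_node_lt hj2] at hd
        obtain ⟨w, hw1, hw2, hw3⟩ := ihl hsl j1 j2 m1 m2 hlt (by omega)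
        exact ⟨w, hw1, hw2, by
          rw [depth_node_lt (lt_trans hw2 hj2), depth_node_lt hj1]; omega⟩
      · rw [hj2, depth_node_lt hj1] at hd; simp [depth] at hd
      · exact ⟨a, hj1, hj2, by
          rw [depth_node_lt hj1]; simp [depth]⟩
    · have h2a : a < j2 := by omega
      rw [hj1, depth_node_gt h2a] at hd; simp [depth] at hd
    · have hj2 : a < j2 := lt_trans hj1 hlt
      have m1 := mem_right_of_lt ⟨hl, hr, hsl, hsr⟩ h1 hj1
      have m2 := mem_right_of_lt ⟨hl, hr, hsl, hsr⟩ h2 hj2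
      rw [depth_node_gt hj1, depth_node_gt hj2] at hd
      obtain ⟨w, hw1, hw2, hw3⟩ := ihr hsr j1 j2 m1 m2 hlt (by omega)
      exact ⟨w, hw1, hw2, by
        rw [depth_node_gt (lt_trans hj1 hw1), depth_node_gt hj1]; omega⟩

/-- the minimum depth over a convex key set is attained uniquely -/
lemma min_unique {R : BTree} (hR : IsSearchTree R) {U : Finset ℕ} (hC : Convex U)
    (hUR : U ⊆ keys R) {j1 j2 : ℕ} (h1 : j1 ∈ U) (h2 : j2 ∈ U) (hlt : j1 < j2)
    (d1 : depth R j1 = μ R U) (d2 : depth R j2 = μ R U) : False := by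
  obtain ⟨w, hw1, hw2, hw3⟩ :=
    exists_between hR j1 j2 (hUR h1) (hUR h2) hlt (d1.trans d2.symm)
  have hwU : w ∈ U := hC h1 h2 (le_of_lt hw1) (le_of_lt hw2)
  have := μ_le (R := R) hwU
  omega

end BTree

namespace BTree

lemma mem_subtreeAt {S : BTree} (hS : IsSearchTree S) :
    ∀ x, x ∈ keys S → x ∈ keys (subtreeAt S x) := by
  induction S with
  | leaf => intro x hx; simp [keys] at hx
  | node l a r ihl ihr =>
    intro x hx
    rcases lt_trichotomy x a with h | h | h
    · rw [subtreeAt_node_lt h]; exact ihl hS.2.2.1 x (mem_left_of_lt hS hx h)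
    · rw [h, subtreeAt_self]; rw [h] at hx; exact hx
    · rw [subtreeAt_node_gt h]; exact ihr hS.2.2.2 x (mem_right_of_lt hS hx h)

lemma subtreeAt_keys_subset (S : BTree) (x : ℕ) : keys (subtreeAt S x) ⊆ keys S := by
  induction S with
  | leaf => simp [subtreeAt]
  | node l a r ihl ihr =>
    by_cases h1 : x = a
    · rw [h1, subtreeAt_self]
    · by_cases h2 : x < a
      · rw [subtreeAt_node_lt h2]
        exact ihl.trans (by intro y hy; exact mem_keys_node.2 (Or.inl hy))
      · rw [subtreeAt_node_gt (by omega)]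
        exact ihr.trans (by intro y hy; exact mem_keys_node.2 (Or.inr (Or.inr hy)))

/-- the potential is the sum over keys of the min-depths of subtrees -/
lemma Φ_eq_sum (R : BTree) : ∀ S : BTree, IsSearchTree S →
    ∑ i ∈ keys S, (-2 : ℤ) * (μ R (keys (subtreeAt S i)) : ℤ) = Φ R S := by
  intro S
  induction S with
  | leaf => intro _; simp [keys, Φ]
  | node l a r ihl ihr =>
    intro hS
    obtain ⟨hl, hr, hsl, hsr⟩ := hS
    have hd1 : Disjoint (keys l) ({a} : Finset ℕ) := by
      simp only [Finset.disjoint_singleton_right]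
      intro h; exact absurd (hl a h) (lt_irrefl a)
    have hd2 : Disjoint (keys l ∪ {a}) (keys r) := by
      rw [Finset.disjoint_union_left]
      constructor
      · rw [Finset.disjoint_left]; intro y hy hy'
        exact absurd (lt_trans (hl y hy) (hr y hy')) (lt_irrefl y)
      · simp only [Finset.disjoint_singleton_left]
        intro h; exact absurd (hr a h) (lt_irrefl a)
    rw [keys_node, Finset.sum_union hd2, Finset.sum_union hd1, Finset.sum_singleton]
    have e1 : ∀ i ∈ keys l, (-2 : ℤ) * (μ R (keys (subtreeAt (node l a r) i)) : ℤ)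
        = (-2 : ℤ) * (μ R (keys (subtreeAt l i)) : ℤ) := by
      intro i hi; rw [subtreeAt_node_lt (hl i hi)]
    have e2 : ∀ i ∈ keys r, (-2 : ℤ) * (μ R (keys (subtreeAt (node l a r) i)) : ℤ)
        = (-2 : ℤ) * (μ R (keys (subtreeAt r i)) : ℤ) := by
      intro i hi; rw [subtreeAt_node_gt (hr i hi)]
    rw [Finset.sum_congr rfl e1, Finset.sum_congr rfl e2, ihl hsl, ihr hsr,
      subtreeAt_self]
    show Φ R l + _ + Φ R r = Φ R (node l a r)
    rw [Φ]; ring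

/-- arithmetic for the zig-zig / zig-zag cases -/
lemma step_arith {kS kl kll n1 n2 : ℕ} (h1 : kS ≤ kl) (h2 : kl ≤ kll)
    (h3 : kS ≤ n1) (h4 : kS ≤ n2) (hkey : kS = kll → 2 * kS + 1 ≤ n1 + n2) :
    2 + 2 * kl + 6 * kS ≤ 4 * kll + 2 * n1 + 2 * n2 := by
  rcases eq_or_lt_of_le (h1.trans h2) with h | h
  · have := hkey h; omega
  · omega

end BTree

namespace BTree

lemma splay_self {l r : BTree} {a : ℕ} : splay a (node l a r) = node l a r := by
  cases l <;> cases r <;>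
    simp [splay.eq_2, splay.eq_3, splay.eq_4, splay.eq_5]

lemma splay_zig_left {ll lr r : BTree} {a b : ℕ} (h : b < a) :
    splay b (node (node ll b lr) a r) = node ll b (node lr a r) := by
  cases r <;>
    simp [splay.eq_4, splay.eq_5, h, Nat.ne_of_lt h]

lemma splay_zigzig_left {ll lr r t1 t2 : BTree} {a b c x : ℕ} (h1 : x < b) (h2 : b < a)
    (h : splay x ll = node t1 c t2) :
    splay x (node (node ll b lr) a r) = node t1 c (node t2 b (node lr a r)) := by
  have hxa : x < a := h1.trans h2
  cases r <;>
    [rw [splay.eq_4, if_neg (Nat.ne_of_lt hxa), if_pos hxa, if_neg (Nat.ne_of_lt h1),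
      if_pos h1, h];
     rw [splay.eq_5, if_neg (Nat.ne_of_lt hxa), if_pos hxa, if_neg (Nat.ne_of_lt h1),
      if_pos h1, h]]

lemma splay_zigzag_left {ll lr r t1 t2 : BTree} {a b c x : ℕ} (h1 : b < x) (h2 : x < a)
    (h : splay x lr = node t1 c t2) :
    splay x (node (node ll b lr) a r) = node (node ll b t1) c (node t2 a r) := by
  cases r <;>
    [rw [splay.eq_4, if_neg (Nat.ne_of_lt h2), if_pos h2, if_neg (Nat.ne_of_gt h1),
      if_neg (by omega), h];
     rw [splay.eq_5, if_neg (Nat.ne_of_lt h2), if_pos h2, if_neg (Nat.ne_of_gt h1),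
      if_neg (by omega), h]]

lemma splay_zig_right {l rl rr : BTree} {a b : ℕ} (h : a < b) :
    splay b (node l a (node rl b rr)) = node (node l a rl) b rr := by
  have h1 : ¬ b = a := Nat.ne_of_gt h
  have h2 : ¬ b < a := by omega
  cases l <;>
    simp [splay.eq_3, splay.eq_5, h1, h2]

lemma splay_zigzag_right {l rl rr t1 t2 : BTree} {a b c x : ℕ} (h1 : a < x) (h2 : x < b)
    (h : splay x rl = node t1 c t2) :
    splay x (node l a (node rl b rr)) = node (node l a t1) c (node t2 b rr) := by
  cases l <;>
    [rw [splay.eq_3, if_neg (Nat.ne_of_gt h1), if_neg (by omega : ¬ x < a),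
      if_neg (Nat.ne_of_lt h2), if_pos h2, h];
     rw [splay.eq_5, if_neg (Nat.ne_of_gt h1), if_neg (by omega : ¬ x < a),
      if_neg (Nat.ne_of_lt h2), if_pos h2, h]]

lemma splay_zigzig_right {l rl rr t1 t2 : BTree} {a b c x : ℕ} (h1 : a < b) (h2 : b < x)
    (h : splay x rr = node t1 c t2) :
    splay x (node l a (node rl b rr)) = node (node (node l a rl) b t1) c t2 := by
  have hxa : a < x := h1.trans h2
  cases l <;>
    [rw [splay.eq_3, if_neg (Nat.ne_of_gt hxa), if_neg (by omega : ¬ x < a),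
      if_neg (Nat.ne_of_gt h2), if_neg (by omega : ¬ x < b), h];
     rw [splay.eq_5, if_neg (Nat.ne_of_gt hxa), if_neg (by omega : ¬ x < a),
      if_neg (Nat.ne_of_gt h2), if_neg (by omega : ¬ x < b), h]]

end BTree

namespace BTree

lemma Φ_node {R l r : BTree} {a : ℕ} :
    Φ R (node l a r) = Φ R l + Φ R r - 2 * (μ R (keys (node l a r)) : ℤ) := rfl

lemma two_mins {R : BTree} (hR : IsSearchTree R) {U A B : Finset ℕ} (hC : Convex U)
    (hUR : U ⊆ keys R) (hA : A ⊆ U) (hB : B ⊆ U) (hAne : A.Nonempty) (hBne : B.Nonempty)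
    {c : ℕ} (hsepA : ∀ y ∈ A, y < c) (hsepB : ∀ y ∈ B, c < y) :
    2 * μ R U + 1 ≤ μ R A + μ R B := by
  have hA' := μ_mono (R := R) hA hAne
  have hB' := μ_mono (R := R) hB hBne
  by_contra hcon
  have hA2 : μ R A = μ R U := by omega
  have hB2 : μ R B = μ R U := by omega
  obtain ⟨jA, hjA, hdA⟩ := exists_μ (R := R) hAne
  obtain ⟨jB, hjB, hdB⟩ := exists_μ (R := R) hBne
  exact min_unique hR hC hUR (hA hjA) (hB hjB)
    (lt_trans (hsepA jA hjA) (hsepB jB hjB))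
    (by rw [hdA, hA2]) (by rw [hdB, hB2])

end BTree

namespace BTree

set_option maxHeartbeats 2000000 in
lemma splay_spec (R : BTree) (hR : IsSearchTree R) :
    ∀ N S x, size S ≤ N → IsSearchTree S → x ∈ keys S → Convex (keys S) →
      keys S ⊆ keys R →
    ∃ t1 t2, splay x S = node t1 x t2 ∧ keys (splay x S) = keys S ∧
      IsSearchTree (splay x S) ∧
      (depth S x : ℤ) + Φ R (splay x S) - Φ R S ≤
        6 * ((μ R (keys (subtreeAt S x)) : ℤ) - (μ R (keys S) : ℤ)) + 1 := by
  intro N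
  induction N with
  | zero =>
    intro S x hN hS hx _ _
    cases S with
    | leaf => simp [keys] at hx
    | node l a r => simp [size] at hN
  | succ N ih =>
    intro S x hN hS hx hC hsubR
    cases S with
    | leaf => simp [keys] at hx
    | node l a r =>
      obtain ⟨hl, hr, hsl, hsr⟩ := hS
      rcases lt_trichotomy x a with hxa | hxa | hxa
      · -- x < a
        cases l with
        | leaf =>
          have := mem_left_of_lt ⟨hl, hr, hsl, hsr⟩ hx hxa
          simp [keys] at this
        | node ll b lr =>
          have hxl : x ∈ keys (node ll b lr) := mem_left_of_lt ⟨hl, hr, hsl, hsr⟩ hx hxa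
          obtain ⟨hll, hlr, hsll, hslr⟩ := hsl
          have hba : b < a := hl b (mem_keys_node.2 (Or.inr (Or.inl rfl)))
          rcases lt_trichotomy x b with hxb | hxb | hxb
          · -- zig-zig left
            have hsl' : IsSearchTree (node ll b lr) := ⟨hll, hlr, hsll, hslr⟩
            have hxll : x ∈ keys ll := mem_left_of_lt hsl' hxl hxb
            have hCl : Convex (keys (node ll b lr)) :=
              convex_left ⟨hl, hr, hsl', hsr⟩ hC
            have hCll : Convex (keys ll) := convex_left hsl' hCl
            have hsubl : keys (node ll b lr) ⊆ keys (node (node ll b lr) a r) := by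
              intro y hy; simp only [mem_keys_node] at hy ⊢; tauto
            have hsubll : keys ll ⊆ keys (node ll b lr) := by
              intro y hy; simp only [mem_keys_node] at hy ⊢; tauto
            have hsubllS : keys ll ⊆ keys (node (node ll b lr) a r) := hsubll.trans hsubl
            have hNll : size ll ≤ N := by simp [size] at hN; omega
            obtain ⟨t1, t2, hsp0, hk0, hst0, hineq0⟩ :=
              ih ll x hNll hsll hxll hCll (hsubllS.trans hsubR)
            rw [hsp0] at hk0 hst0 hineq0
            have hk0' : ∀ y, (y ∈ keys t1 ∨ y = x ∨ y ∈ keys t2) ↔ y ∈ keys ll := by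
              intro y; rw [← mem_keys_node, hk0]
            have hsp := splay_zigzig_left (lr := lr) (r := r) hxb hba hsp0
            obtain ⟨ht1, ht2, hst1, hst2⟩ := hst0
            have hkeys : keys (node t1 x (node t2 b (node lr a r))) =
                keys (node (node ll b lr) a r) := by
              ext y
              have := hk0' y
              simp only [mem_keys_node] at this ⊢
              tauto
            have hsepN1 : ∀ y ∈ keys (node lr a r), b < y := by
              intro y hy
              rcases mem_keys_node.1 hy with h | h | h
              · exact hlr y h
              · omega
              · have := hr y h; omega
            have ht2b : ∀ y ∈ keys t2, y < b := by
              intro y hy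
              exact hll y ((hk0' y).1 (Or.inr (Or.inr hy)))
            have hsubN1 : keys (node lr a r) ⊆ keys (node (node ll b lr) a r) := by
              intro y hy; simp only [mem_keys_node] at hy ⊢; tauto
            have hsubN2 : keys (node t2 b (node lr a r)) ⊆
                keys (node (node ll b lr) a r) := by
              intro y hy
              have := hk0' y
              simp only [mem_keys_node] at hy this ⊢
              tauto
            have hneN1 : (keys (node lr a r)).Nonempty :=
              ⟨a, mem_keys_node.2 (Or.inr (Or.inl rfl))⟩
            have hneN2 : (keys (node t2 b (node lr a r))).Nonempty :=
              ⟨b, mem_keys_node.2 (Or.inr (Or.inl rfl))⟩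
            have hnell : (keys ll).Nonempty := ⟨x, hxll⟩
            have hnel : (keys (node ll b lr)).Nonempty :=
              ⟨b, mem_keys_node.2 (Or.inr (Or.inl rfl))⟩
            have m1 := μ_mono (R := R) hsubl hnel
            have m2 := μ_mono (R := R) hsubll hnell
            have m3 := μ_mono (R := R) hsubN1 hneN1
            have m4 := μ_mono (R := R) hsubN2 hneN2
            have hkey : μ R (keys (node (node ll b lr) a r)) = μ R (keys ll) →
                2 * μ R (keys (node (node ll b lr) a r)) + 1 ≤
                  μ R (keys (node lr a r)) + μ R (keys (node t2 b (node lr a r))) := by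
              intro heq
              have h2 := two_mins hR hC hsubR hsubllS hsubN1 hnell hneN1
                (c := b) hll hsepN1
              omega
            have harith := step_arith m1 m2 m3 m4 hkey
            refine ⟨t1, node t2 b (node lr a r), hsp, by rw [hsp, hkeys], ?_, ?_⟩
            · rw [hsp]
              refine ⟨ht1, ?_, hst1, ht2b, hsepN1, hst2, ?_, hr, hslr, hsr⟩
              · intro y hy
                rcases mem_keys_node.1 hy with h | h | h
                · exact ht2 y h
                · omega
                · have := hsepN1 y h; omega
              · intro y hy; exact hl y (mem_keys_node.2 (Or.inr (Or.inr hy)))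
            · rw [hsp, subtreeAt_node_lt hxa, subtreeAt_node_lt hxb]
              have hd : depth (node (node ll b lr) a r) x = depth ll x + 2 := by
                rw [depth_node_lt hxa, depth_node_lt hxb]
              rw [hd]
              simp only [Φ_node] at hineq0 ⊢
              rw [hk0] at hineq0
              rw [hkeys]
              have harith' : (2 : ℤ) + 2 * (μ R (keys (node ll b lr)) : ℤ) +
                  6 * (μ R (keys (node (node ll b lr) a r)) : ℤ) ≤
                  4 * (μ R (keys ll) : ℤ) + 2 * (μ R (keys (node lr a r)) : ℤ) +
                  2 * (μ R (keys (node t2 b (node lr a r))) : ℤ) := by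
                exact_mod_cast harith
              push_cast
              linarith
          · -- zig left
            subst hxb
            have hsp := splay_zig_left (ll := ll) (lr := lr) (r := r) hba
            have hkeys : keys (node ll x (node lr a r)) = keys (node (node ll x lr) a r) := by
              ext y; simp only [mem_keys_node]; tauto
            refine ⟨ll, node lr a r, hsp, by rw [hsp, hkeys], ?_, ?_⟩
            · rw [hsp]
              refine ⟨hll, ?_, hsll, ?_, hr, hslr, hsr⟩
              · intro y hy
                rcases mem_keys_node.1 hy with h | h | h
                · exact hlr y h
                · omega
                · exact lt_trans hba (hr y h)
              · intro y hy; exact hl y (mem_keys_node.2 (Or.inr (Or.inr hy)))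
            · rw [hsp, subtreeAt_node_lt hba, subtreeAt_self]
              have hd : depth (node (node ll x lr) a r) x = 1 := by
                rw [depth_node_lt hba]; simp [depth]
              rw [hd]
              have hsub1 : keys (node lr a r) ⊆ keys (node (node ll x lr) a r) := by
                intro y hy; simp only [mem_keys_node] at hy ⊢; tauto
              have hsub2 : keys (node ll x lr) ⊆ keys (node (node ll x lr) a r) := by
                intro y hy; simp only [mem_keys_node] at hy ⊢; tauto
              have hne1 : (keys (node lr a r)).Nonempty :=
                ⟨a, mem_keys_node.2 (Or.inr (Or.inl rfl))⟩
              have hne2 : (keys (node ll x lr)).Nonempty :=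
                ⟨x, mem_keys_node.2 (Or.inr (Or.inl rfl))⟩
              have m1' : (μ R (keys (node (node ll x lr) a r)) : ℤ) ≤
                  (μ R (keys (node lr a r)) : ℤ) := by
                exact_mod_cast μ_mono (R := R) hsub1 hne1
              have m2' : (μ R (keys (node (node ll x lr) a r)) : ℤ) ≤
                  (μ R (keys (node ll x lr)) : ℤ) := by
                exact_mod_cast μ_mono (R := R) hsub2 hne2
              have e1 : μ R (keys (node ll x (node lr a r))) =
                  μ R (keys (node (node ll x lr) a r)) := by rw [hkeys]
              simp only [Φ_node]
              rw [e1]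
              push_cast
              linarith
          · -- zig-zag left
            have hsl' : IsSearchTree (node ll b lr) := ⟨hll, hlr, hsll, hslr⟩
            have hxlr : x ∈ keys lr := mem_right_of_lt hsl' hxl hxb
            have hCl : Convex (keys (node ll b lr)) :=
              convex_left ⟨hl, hr, hsl', hsr⟩ hC
            have hClr : Convex (keys lr) := convex_right hsl' hCl
            have hsubl : keys (node ll b lr) ⊆ keys (node (node ll b lr) a r) := by
              intro y hy; simp only [mem_keys_node] at hy ⊢; tauto
            have hsublr : keys lr ⊆ keys (node ll b lr) := by
              intro y hy; simp only [mem_keys_node] at hy ⊢; tauto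
            have hsublrS : keys lr ⊆ keys (node (node ll b lr) a r) := hsublr.trans hsubl
            have hNlr : size lr ≤ N := by simp [size] at hN; omega
            obtain ⟨t1, t2, hsp0, hk0, hst0, hineq0⟩ :=
              ih lr x hNlr hslr hxlr hClr (hsublrS.trans hsubR)
            rw [hsp0] at hk0 hst0 hineq0
            have hk0' : ∀ y, (y ∈ keys t1 ∨ y = x ∨ y ∈ keys t2) ↔ y ∈ keys lr := by
              intro y; rw [← mem_keys_node, hk0]
            have hsp := splay_zigzag_left (ll := ll) (r := r) hxb hxa hsp0
            obtain ⟨ht1, ht2, hst1, hst2⟩ := hst0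
            have hkeys : keys (node (node ll b t1) x (node t2 a r)) =
                keys (node (node ll b lr) a r) := by
              ext y
              have := hk0' y
              simp only [mem_keys_node] at this ⊢
              tauto
            have hsepM1 : ∀ y ∈ keys (node ll b t1), y < x := by
              intro y hy
              rcases mem_keys_node.1 hy with h | h | h
              · have := hll y h; omega
              · omega
              · exact ht1 y h
            have hsepM2 : ∀ y ∈ keys (node t2 a r), x < y := by
              intro y hy
              rcases mem_keys_node.1 hy with h | h | h
              · exact ht2 y h
              · omega
              · have := hr y h; omega
            have hsubM1 : keys (node ll b t1) ⊆ keys (node (node ll b lr) a r) := by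
              intro y hy
              have := hk0' y
              simp only [mem_keys_node] at hy this ⊢
              tauto
            have hsubM2 : keys (node t2 a r) ⊆ keys (node (node ll b lr) a r) := by
              intro y hy
              have := hk0' y
              simp only [mem_keys_node] at hy this ⊢
              tauto
            have hneM1 : (keys (node ll b t1)).Nonempty :=
              ⟨b, mem_keys_node.2 (Or.inr (Or.inl rfl))⟩
            have hneM2 : (keys (node t2 a r)).Nonempty :=
              ⟨a, mem_keys_node.2 (Or.inr (Or.inl rfl))⟩
            have hnelr : (keys lr).Nonempty := ⟨x, hxlr⟩
            have hnel : (keys (node ll b lr)).Nonempty :=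
              ⟨b, mem_keys_node.2 (Or.inr (Or.inl rfl))⟩
            have m1 := μ_mono (R := R) hsubl hnel
            have m2 := μ_mono (R := R) hsublr hnelr
            have m3 := μ_mono (R := R) hsubM1 hneM1
            have m4 := μ_mono (R := R) hsubM2 hneM2
            have hkey : μ R (keys (node (node ll b lr) a r)) = μ R (keys lr) →
                2 * μ R (keys (node (node ll b lr) a r)) + 1 ≤
                  μ R (keys (node ll b t1)) + μ R (keys (node t2 a r)) := by
              intro _
              exact two_mins hR hC hsubR hsubM1 hsubM2 hneM1 hneM2
                (c := x) hsepM1 hsepM2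
            have harith := step_arith m1 m2 m3 m4 hkey
            refine ⟨node ll b t1, node t2 a r, hsp, by rw [hsp, hkeys], ?_, ?_⟩
            · rw [hsp]
              refine ⟨hsepM1, hsepM2, ⟨hll, ?_, hsll, hst1⟩, ?_, hr, hst2, hsr⟩
              · intro y hy
                exact hlr y ((hk0' y).1 (Or.inl hy))
              · intro y hy
                exact hl y (mem_keys_node.2 (Or.inr (Or.inr ((hk0' y).1 (Or.inr (Or.inr hy))))))
            · rw [hsp, subtreeAt_node_lt hxa, subtreeAt_node_gt hxb]
              have hd : depth (node (node ll b lr) a r) x = depth lr x + 2 := by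
                rw [depth_node_lt hxa, depth_node_gt hxb]
              rw [hd]
              simp only [Φ_node] at hineq0 ⊢
              rw [hk0] at hineq0
              rw [hkeys]
              have harith' : (2 : ℤ) + 2 * (μ R (keys (node ll b lr)) : ℤ) +
                  6 * (μ R (keys (node (node ll b lr) a r)) : ℤ) ≤
                  4 * (μ R (keys lr) : ℤ) + 2 * (μ R (keys (node ll b t1)) : ℤ) +
                  2 * (μ R (keys (node t2 a r)) : ℤ) := by
                exact_mod_cast harith
              push_cast
              linarith
      · -- x = a
        refine ⟨l, r, by rw [hxa, splay_self], by rw [hxa, splay_self], ?_, ?_⟩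
        · rw [hxa, splay_self]; exact ⟨hl, hr, hsl, hsr⟩
        · rw [hxa, splay_self, subtreeAt_self]
          simp [depth]
      · -- a < x
        cases r with
        | leaf =>
          have := mem_right_of_lt ⟨hl, hr, hsl, hsr⟩ hx hxa
          simp [keys] at this
        | node rl b rr =>
          have hxr : x ∈ keys (node rl b rr) := mem_right_of_lt ⟨hl, hr, hsl, hsr⟩ hx hxa
          obtain ⟨hrl, hrr, hsrl, hsrr⟩ := hsr
          have hab : a < b := hr b (mem_keys_node.2 (Or.inr (Or.inl rfl)))
          rcases lt_trichotomy x b with hxb | hxb | hxb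
          · -- zig-zag right
            have hsr' : IsSearchTree (node rl b rr) := ⟨hrl, hrr, hsrl, hsrr⟩
            have hxrl : x ∈ keys rl := mem_left_of_lt hsr' hxr hxb
            have hCr : Convex (keys (node rl b rr)) :=
              convex_right ⟨hl, hr, hsl, hsr'⟩ hC
            have hCrl : Convex (keys rl) := convex_left hsr' hCr
            have hsubr : keys (node rl b rr) ⊆ keys (node l a (node rl b rr)) := by
              intro y hy; simp only [mem_keys_node] at hy ⊢; tauto
            have hsubrl : keys rl ⊆ keys (node rl b rr) := by
              intro y hy; simp only [mem_keys_node] at hy ⊢; tauto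
            have hsubrlS : keys rl ⊆ keys (node l a (node rl b rr)) := hsubrl.trans hsubr
            have hNrl : size rl ≤ N := by simp [size] at hN; omega
            obtain ⟨t1, t2, hsp0, hk0, hst0, hineq0⟩ :=
              ih rl x hNrl hsrl hxrl hCrl (hsubrlS.trans hsubR)
            rw [hsp0] at hk0 hst0 hineq0
            have hk0' : ∀ y, (y ∈ keys t1 ∨ y = x ∨ y ∈ keys t2) ↔ y ∈ keys rl := by
              intro y; rw [← mem_keys_node, hk0]
            have hsp := splay_zigzag_right (l := l) (rr := rr) hxa hxb hsp0
            obtain ⟨ht1, ht2, hst1, hst2⟩ := hst0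
            have hkeys : keys (node (node l a t1) x (node t2 b rr)) =
                keys (node l a (node rl b rr)) := by
              ext y
              have := hk0' y
              simp only [mem_keys_node] at this ⊢
              tauto
            have hsepM1 : ∀ y ∈ keys (node l a t1), y < x := by
              intro y hy
              rcases mem_keys_node.1 hy with h | h | h
              · have := hl y h; omega
              · omega
              · exact ht1 y h
            have hsepM2 : ∀ y ∈ keys (node t2 b rr), x < y := by
              intro y hy
              rcases mem_keys_node.1 hy with h | h | h
              · exact ht2 y h
              · omega
              · have := hrr y h; omega
            have hsubM1 : keys (node l a t1) ⊆ keys (node l a (node rl b rr)) := by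
              intro y hy
              have := hk0' y
              simp only [mem_keys_node] at hy this ⊢
              tauto
            have hsubM2 : keys (node t2 b rr) ⊆ keys (node l a (node rl b rr)) := by
              intro y hy
              have := hk0' y
              simp only [mem_keys_node] at hy this ⊢
              tauto
            have hneM1 : (keys (node l a t1)).Nonempty :=
              ⟨a, mem_keys_node.2 (Or.inr (Or.inl rfl))⟩
            have hneM2 : (keys (node t2 b rr)).Nonempty :=
              ⟨b, mem_keys_node.2 (Or.inr (Or.inl rfl))⟩
            have hnerl : (keys rl).Nonempty := ⟨x, hxrl⟩
            have hner : (keys (node rl b rr)).Nonempty :=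
              ⟨b, mem_keys_node.2 (Or.inr (Or.inl rfl))⟩
            have m1 := μ_mono (R := R) hsubr hner
            have m2 := μ_mono (R := R) hsubrl hnerl
            have m3 := μ_mono (R := R) hsubM1 hneM1
            have m4 := μ_mono (R := R) hsubM2 hneM2
            have hkey : μ R (keys (node l a (node rl b rr))) = μ R (keys rl) →
                2 * μ R (keys (node l a (node rl b rr))) + 1 ≤
                  μ R (keys (node l a t1)) + μ R (keys (node t2 b rr)) := by
              intro _
              exact two_mins hR hC hsubR hsubM1 hsubM2 hneM1 hneM2
                (c := x) hsepM1 hsepM2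
            have harith := step_arith m1 m2 m3 m4 hkey
            refine ⟨node l a t1, node t2 b rr, hsp, by rw [hsp, hkeys], ?_, ?_⟩
            · rw [hsp]
              refine ⟨hsepM1, hsepM2, ⟨hl, ?_, hsl, hst1⟩, ?_, hrr, hst2, hsrr⟩
              · intro y hy
                exact hr y (mem_keys_node.2 (Or.inl ((hk0' y).1 (Or.inl hy))))
              · intro y hy
                exact hrl y ((hk0' y).1 (Or.inr (Or.inr hy)))
            · rw [hsp, subtreeAt_node_gt hxa, subtreeAt_node_lt hxb]
              have hd : depth (node l a (node rl b rr)) x = depth rl x + 2 := by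
                rw [depth_node_gt hxa, depth_node_lt hxb]
              rw [hd]
              simp only [Φ_node] at hineq0 ⊢
              rw [hk0] at hineq0
              rw [hkeys]
              have harith' : (2 : ℤ) + 2 * (μ R (keys (node rl b rr)) : ℤ) +
                  6 * (μ R (keys (node l a (node rl b rr))) : ℤ) ≤
                  4 * (μ R (keys rl) : ℤ) + 2 * (μ R (keys (node l a t1)) : ℤ) +
                  2 * (μ R (keys (node t2 b rr)) : ℤ) := by
                exact_mod_cast harith
              push_cast
              linarith
          · -- zig right
            subst hxb
            have hsp := splay_zig_right (l := l) (rl := rl) (rr := rr) hab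
            have hkeys : keys (node (node l a rl) x rr) = keys (node l a (node rl x rr)) := by
              ext y; simp only [mem_keys_node]; tauto
            refine ⟨node l a rl, rr, hsp, by rw [hsp, hkeys], ?_, ?_⟩
            · rw [hsp]
              refine ⟨?_, hrr, ⟨hl, ?_, hsl, hsrl⟩, hsrr⟩
              · intro y hy
                rcases mem_keys_node.1 hy with h | h | h
                · have := hl y h; omega
                · omega
                · exact hrl y h
              · intro y hy; exact hr y (mem_keys_node.2 (Or.inl hy))
            · rw [hsp, subtreeAt_node_gt hab, subtreeAt_self]
              have hd : depth (node l a (node rl x rr)) x = 1 := by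
                rw [depth_node_gt hab]; simp [depth]
              rw [hd]
              have hsub1 : keys (node l a rl) ⊆ keys (node l a (node rl x rr)) := by
                intro y hy; simp only [mem_keys_node] at hy ⊢; tauto
              have hsub2 : keys (node rl x rr) ⊆ keys (node l a (node rl x rr)) := by
                intro y hy; simp only [mem_keys_node] at hy ⊢; tauto
              have hne1 : (keys (node l a rl)).Nonempty :=
                ⟨a, mem_keys_node.2 (Or.inr (Or.inl rfl))⟩
              have hne2 : (keys (node rl x rr)).Nonempty :=
                ⟨x, mem_keys_node.2 (Or.inr (Or.inl rfl))⟩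
              have m1' : (μ R (keys (node l a (node rl x rr))) : ℤ) ≤
                  (μ R (keys (node l a rl)) : ℤ) := by
                exact_mod_cast μ_mono (R := R) hsub1 hne1
              have m2' : (μ R (keys (node l a (node rl x rr))) : ℤ) ≤
                  (μ R (keys (node rl x rr)) : ℤ) := by
                exact_mod_cast μ_mono (R := R) hsub2 hne2
              have e1 : μ R (keys (node (node l a rl) x rr)) =
                  μ R (keys (node l a (node rl x rr))) := by rw [hkeys]
              simp only [Φ_node]
              rw [e1]
              push_cast
              linarith
          · -- zig-zig right
            have hsr' : IsSearchTree (node rl b rr) := ⟨hrl, hrr, hsrl, hsrr⟩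
            have hxrr : x ∈ keys rr := mem_right_of_lt hsr' hxr hxb
            have hCr : Convex (keys (node rl b rr)) :=
              convex_right ⟨hl, hr, hsl, hsr'⟩ hC
            have hCrr : Convex (keys rr) := convex_right hsr' hCr
            have hsubr : keys (node rl b rr) ⊆ keys (node l a (node rl b rr)) := by
              intro y hy; simp only [mem_keys_node] at hy ⊢; tauto
            have hsubrr : keys rr ⊆ keys (node rl b rr) := by
              intro y hy; simp only [mem_keys_node] at hy ⊢; tauto
            have hsubrrS : keys rr ⊆ keys (node l a (node rl b rr)) := hsubrr.trans hsubr
            have hNrr : size rr ≤ N := by simp [size] at hN; omega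
            obtain ⟨t1, t2, hsp0, hk0, hst0, hineq0⟩ :=
              ih rr x hNrr hsrr hxrr hCrr (hsubrrS.trans hsubR)
            rw [hsp0] at hk0 hst0 hineq0
            have hk0' : ∀ y, (y ∈ keys t1 ∨ y = x ∨ y ∈ keys t2) ↔ y ∈ keys rr := by
              intro y; rw [← mem_keys_node, hk0]
            have hsp := splay_zigzig_right (l := l) (rl := rl) hab hxb hsp0
            obtain ⟨ht1, ht2, hst1, hst2⟩ := hst0
            have hkeys : keys (node (node (node l a rl) b t1) x t2) =
                keys (node l a (node rl b rr)) := by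
              ext y
              have := hk0' y
              simp only [mem_keys_node] at this ⊢
              tauto
            have hsepN1 : ∀ y ∈ keys (node l a rl), y < b := by
              intro y hy
              rcases mem_keys_node.1 hy with h | h | h
              · have := hl y h; omega
              · omega
              · exact hrl y h
            have ht1b : ∀ y ∈ keys t1, b < y := by
              intro y hy
              exact hrr y ((hk0' y).1 (Or.inl hy))
            have hsubN1 : keys (node l a rl) ⊆ keys (node l a (node rl b rr)) := by
              intro y hy; simp only [mem_keys_node] at hy ⊢; tauto
            have hsubN2 : keys (node (node l a rl) b t1) ⊆
                keys (node l a (node rl b rr)) := by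
              intro y hy
              have := hk0' y
              simp only [mem_keys_node] at hy this ⊢
              tauto
            have hneN1 : (keys (node l a rl)).Nonempty :=
              ⟨a, mem_keys_node.2 (Or.inr (Or.inl rfl))⟩
            have hneN2 : (keys (node (node l a rl) b t1)).Nonempty :=
              ⟨b, mem_keys_node.2 (Or.inr (Or.inl rfl))⟩
            have hnerr : (keys rr).Nonempty := ⟨x, hxrr⟩
            have hner : (keys (node rl b rr)).Nonempty :=
              ⟨b, mem_keys_node.2 (Or.inr (Or.inl rfl))⟩
            have m1 := μ_mono (R := R) hsubr hner
            have m2 := μ_mono (R := R) hsubrr hnerr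
            have m3 := μ_mono (R := R) hsubN1 hneN1
            have m4 := μ_mono (R := R) hsubN2 hneN2
            have hkey : μ R (keys (node l a (node rl b rr))) = μ R (keys rr) →
                2 * μ R (keys (node l a (node rl b rr))) + 1 ≤
                  μ R (keys (node l a rl)) + μ R (keys (node (node l a rl) b t1)) := by
              intro heq
              have h2 := two_mins hR hC hsubR hsubN1 hsubrrS hneN1 hnerr
                (c := b) hsepN1 hrr
              omega
            have harith := step_arith m1 m2 m3 m4 hkey
            refine ⟨node (node l a rl) b t1, t2, hsp, by rw [hsp, hkeys], ?_, ?_⟩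
            · rw [hsp]
              refine ⟨?_, ht2, ⟨hsepN1, ht1b, ⟨hl, ?_, hsl, hsrl⟩, hst1⟩, hst2⟩
              · intro y hy
                rcases mem_keys_node.1 hy with h | h | h
                · have := hsepN1 y h; omega
                · omega
                · exact ht1 y h
              · intro y hy; exact hr y (mem_keys_node.2 (Or.inl hy))
            · rw [hsp, subtreeAt_node_gt hxa, subtreeAt_node_gt hxb]
              have hd : depth (node l a (node rl b rr)) x = depth rr x + 2 := by
                rw [depth_node_gt hxa, depth_node_gt hxb]
              rw [hd]
              simp only [Φ_node] at hineq0 ⊢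
              rw [hk0] at hineq0
              rw [hkeys]
              have harith' : (2 : ℤ) + 2 * (μ R (keys (node rl b rr)) : ℤ) +
                  6 * (μ R (keys (node l a (node rl b rr))) : ℤ) ≤
                  4 * (μ R (keys rr) : ℤ) + 2 * (μ R (keys (node l a rl)) : ℤ) +
                  2 * (μ R (keys (node (node l a rl) b t1)) : ℤ) := by
                exact_mod_cast harith
              push_cast
              linarith

end BTree

namespace BTree

lemma pot_eq (R : BTree) (n : ℕ) (T : BTree) (hTs : IsSearchTree T)
    (hTk : keys T = Finset.Icc 1 n) :
    minDepthPotential R n T = ((Φ R T : ℤ) : ℝ) := by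
  rw [minDepthPotential, ← hTk, ← Φ_eq_sum R T hTs]
  push_cast
  rfl

end BTree

/-- There is an absolute constant `C > 0` such that for all BSTs `T`, `R` on `{1,…,n}` and
every key `i`, the amortized cost of splaying `i` with respect to the min-depth potential
`φ_R` is `O(d_R(i))`: `(1 + d_T(i)) + φ_R(T′) − φ_R(T) ≤ C·(d_R(i) + 1)`. -/
theorem splay_amortized_min_depth : ∃ C : ℝ, 0 < C ∧
    ∀ (n : ℕ) (T R : BTree) (i : ℕ), T.IsBSTOn n → R.IsBSTOn n →
      i ∈ Finset.Icc 1 n →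
      (1 + (BTree.depth T i : ℝ)) +
          minDepthPotential R n (BTree.splay i T) - minDepthPotential R n T ≤
        C * ((BTree.depth R i : ℝ) + 1) := by
  refine ⟨7, by norm_num, ?_⟩
  intro n T R i hT hR hi
  obtain ⟨hTs, hTk⟩ := hT
  obtain ⟨hRs, hRk⟩ := hR
  have hiT : i ∈ BTree.keys T := by rw [hTk]; exact hi
  have hC : BTree.Convex (BTree.keys T) := by
    rw [hTk]
    intro u v w hu hw h1 h2
    simp only [Finset.mem_Icc] at *
    omega
  have hsubR : BTree.keys T ⊆ BTree.keys R := by rw [hTk, hRk]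
  obtain ⟨t1, t2, hsp, hk, hst, hineq⟩ :=
    BTree.splay_spec R hRs (BTree.size T) T i le_rfl hTs hiT hC hsubR
  have hpot1 : minDepthPotential R n T = ((BTree.Φ R T : ℤ) : ℝ) :=
    BTree.pot_eq R n T hTs hTk
  have hpot2 : minDepthPotential R n (BTree.splay i T) =
      ((BTree.Φ R (BTree.splay i T) : ℤ) : ℝ) :=
    BTree.pot_eq R n (BTree.splay i T) hst (hk.trans hTk)
  have hμi : BTree.μ R (BTree.keys (BTree.subtreeAt T i)) ≤ BTree.depth R i :=
    BTree.μ_le (BTree.mem_subtreeAt hTs i hiT)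
  have hZ : (BTree.depth T i : ℤ) + BTree.Φ R (BTree.splay i T) - BTree.Φ R T ≤
      6 * (BTree.depth R i : ℤ) + 1 := by
    have h0 : (0 : ℤ) ≤ (BTree.μ R (BTree.keys T) : ℤ) := Int.ofNat_nonneg _
    have h1 : ((BTree.μ R (BTree.keys (BTree.subtreeAt T i)) : ℤ)) ≤
        (BTree.depth R i : ℤ) := by exact_mod_cast hμi
    linarith [hineq]
  rw [hpot1, hpot2]
  have hZR : ((BTree.depth T i : ℤ) : ℝ) + ((BTree.Φ R (BTree.splay i T) : ℤ) : ℝ) -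
      ((BTree.Φ R T : ℤ) : ℝ) ≤ 6 * ((BTree.depth R i : ℤ) : ℝ) + 1 := by
    exact_mod_cast hZ
  push_cast at hZR
  have hd0 : (0 : ℝ) ≤ (BTree.depth R i : ℝ) := Nat.cast_nonneg _
  linarith
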